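/- arXiv:2401.15461 — 3 statements merged into one kernel-verified Lean document; each statement's English description precedes it below -/
import Mathlib

section
/- Let X^n = (X_1,…,X_n) be a random vector whose distribution is invariant under every permutation of coordinates (for every n), let θ_1, θ_2, … be i.i.d. Uniform[0,1] independent of the data, and define the smoothed sequential ranks R_n = (1/n)·#{i≤n : X_i > X_n} + θ_n·(1/n)·#{i≤n : X_i = X_n} (counting the n-th point itself in the tie count). Then R_1, R_2, … are i.i.d. Uniform[0,1]. -/
/-!
Given the data, `R n ≤ a` is the event `θ n ≤ (a (n + 1) - #above) / #ties`, of probability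
`rankCDF` over `θ n` alone. By exchangeability, the expectation of a product of such conditional
probabilities over `n < N` equals its average over the `N!` orderings of the first `N`
observations. Choose first which observation comes last: the last factor depends only on that
choice, and the other factors form the same average for the remaining `N - 1` observations.
Averaged over the `N` choices, the last factor is `P(U ≤ a)`, because the observations sharing a
value `v` share the segment `[#above v, #above v + #ties v]`, and these segments tile `[0, N]`.
So the joint CDF of the ranks is a product of uniform CDFs.
-/

open MeasureTheory ProbabilityTheory Finset
open scoped ENNReal Nat

def Equiv.Perm.decomposeFinLast {n : ℕ} :
    Equiv.Perm (Fin (n + 1)) ≃ Fin (n + 1) × Equiv.Perm (Fin n) :=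
  ((Equiv.permCongr finSuccEquivLast).trans Equiv.Perm.decomposeOption).trans
    (Equiv.prodCongr finSuccEquivLast.symm (Equiv.refl _))

@[simp]
theorem Equiv.Perm.decomposeFinLast_symm_apply_last {n : ℕ} (p : Fin (n + 1))
    (e : Equiv.Perm (Fin n)) : Equiv.Perm.decomposeFinLast.symm (p, e) (Fin.last n) = p := by
  simp [Equiv.Perm.decomposeFinLast, Equiv.permCongr_apply]

@[simp]
theorem Equiv.Perm.decomposeFinLast_symm_apply_castSucc {n : ℕ} (p : Fin (n + 1))
    (e : Equiv.Perm (Fin n)) (x : Fin n) :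
    Equiv.Perm.decomposeFinLast.symm (p, e) x.castSucc
      = Equiv.swap (Fin.last n) p (e x).castSucc := by
  simp [Equiv.Perm.decomposeFinLast, Equiv.permCongr_apply,
    finSuccEquivLast.symm.injective.map_swap]

lemma card_filter_range_eq_card_filter_fin (n : ℕ) (p : ℕ → Prop) [DecidablePred p] :
    #{i ∈ range n | p i} = #{k : Fin n | p k} := by
  rw [card_filter, card_filter, Fin.sum_univ_eq_sum_range (fun i => if p i then 1 else 0)]

lemma card_filter_comp_perm {ι : Type*} [Fintype ι] (π : Equiv.Perm ι) (p : ι → Prop)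
    [DecidablePred p] : #{k | p (π k)} = #{k | p k} := by
  rw [card_filter, card_filter]
  exact Equiv.sum_comp π (fun k => if p k then 1 else 0)

lemma extend_val_apply_of_lt {α : Type*} {N i : ℕ} (v : Fin N → α) (e : ℕ → α) (h : i < N) :
    Function.extend Fin.val v e i = v ⟨i, h⟩ :=
  Fin.val_injective.extend_apply v e ⟨i, h⟩

lemma measurable_extend_val (N : ℕ) :
    Measurable fun w : Fin N → ℝ => Function.extend Fin.val w 0 := by
  refine measurable_pi_lambda _ fun i => ?_
  by_cases h : i < N
  · simp_rw [extend_val_apply_of_lt _ _ h]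
    exact measurable_pi_apply _
  · have hi : ¬∃ k : Fin N, (k : ℕ) = i := by rintro ⟨k, rfl⟩; exact h k.isLt
    simp_rw [Function.extend_apply' _ _ _ hi]
    exact measurable_const

section Probability

variable {Ω : Type*} {m0 : MeasurableSpace Ω} {μ : Measure Ω}

theorem card_perm_mul_lintegral_of_exchangeable {ι β : Type*} [Fintype ι] [DecidableEq ι]
    [MeasurableSpace β] {Y : Ω → ι → β} (hY : Measurable Y)
    (hexch : ∀ π : Equiv.Perm ι, μ.map (fun ω => Y ω ∘ π) = μ.map Y)
    {H : (ι → β) → ℝ≥0∞} (hH : Measurable H) :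
    Fintype.card (Equiv.Perm ι) * ∫⁻ ω, H (Y ω) ∂μ
      = ∫⁻ ω, ∑ π : Equiv.Perm ι, H (Y ω ∘ π) ∂μ := by
  have hcomp : ∀ π : Equiv.Perm ι, Measurable fun ω => Y ω ∘ π := fun π =>
    measurable_pi_lambda _ fun i => measurable_pi_apply (π i) |>.comp hY
  have hinv : ∀ π : Equiv.Perm ι, ∫⁻ ω, H (Y ω ∘ π) ∂μ = ∫⁻ ω, H (Y ω) ∂μ := fun π => by
    rw [← lintegral_map hH (hcomp π), hexch π, lintegral_map hH hY]
  rw [lintegral_finsetSum (f := fun (π : Equiv.Perm ι) ω => H (Y ω ∘ π)) univ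
      fun π _ => hH.comp (hcomp π), sum_congr rfl fun π _ => hinv π, sum_const, card_univ,
    nsmul_eq_mul]

theorem measure_iInter_le_comp_eq_lintegral [IsFiniteMeasure μ] {ι β : Type*}
    [MeasurableSpace β] {Y : Ω → β} {θ : ι → Ω → ℝ} (hY : Measurable Y)
    (hθ : ∀ i, Measurable (θ i)) (hYθ : IndepFun Y (fun ω i => θ i ω) μ)
    (hθi : iIndepFun θ μ) (S : Finset ι) {c : ι → β → ℝ} (hc : ∀ i, Measurable (c i)) :
    μ (⋂ i ∈ S, {ω | θ i ω ≤ c i (Y ω)})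
      = ∫⁻ ω, ∏ i ∈ S, μ.map (θ i) (Set.Iic (c i (Y ω))) ∂μ := by
  set Θ : Ω → ι → ℝ := fun ω i => θ i ω
  have hΘ : Measurable Θ := measurable_pi_lambda _ hθ
  set A : Set (β × (ι → ℝ)) := ⋂ i ∈ S, {p | p.2 i ≤ c i p.1}
  have hA : MeasurableSet A := S.measurableSet_biInter fun i _ =>
    measurableSet_le ((measurable_pi_apply i).comp measurable_snd) ((hc i).comp measurable_fst)
  have slice : ∀ y, μ.map Θ (Prod.mk y ⁻¹' A) = ∏ i ∈ S, μ.map (θ i) (Set.Iic (c i y)) := by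
    intro y
    have hslice : Prod.mk y ⁻¹' A = ⋂ i ∈ S, (fun z : ι → ℝ => z i) ⁻¹' Set.Iic (c i y) := by
      ext z; simp [A]
    rw [hslice, Measure.map_apply hΘ (S.measurableSet_biInter fun i _ =>
      measurable_pi_apply i measurableSet_Iic), Set.preimage_iInter₂]
    change μ (⋂ i ∈ S, θ i ⁻¹' Set.Iic (c i y)) = _
    rw [hθi.measure_inter_preimage_eq_mul S fun i _ => measurableSet_Iic]
    exact prod_congr rfl fun i _ => (Measure.map_apply (hθ i) measurableSet_Iic).symm
  calc μ (⋂ i ∈ S, {ω | θ i ω ≤ c i (Y ω)}) = μ.map (fun ω => (Y ω, Θ ω)) A := by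
        rw [Measure.map_apply (hY.prodMk hΘ) hA]
        congr 1
        ext ω
        simp [A, Θ]
    _ = ∫⁻ y, μ.map Θ (Prod.mk y ⁻¹' A) ∂μ.map Y := by
        rw [(indepFun_iff_map_prod_eq_prod_map_map hY.aemeasurable hΘ.aemeasurable).1 hYθ,
          Measure.prod_apply hA]
    _ = ∫⁻ ω, ∏ i ∈ S, μ.map (θ i) (Set.Iic (c i (Y ω))) ∂μ := by
        rw [lintegral_map (measurable_measure_prodMk_left hA) hY]
        simp_rw [slice]

theorem iIndepFun_of_measure_iInter_preimage_Iic [IsProbabilityMeasure μ] {ι : Type*}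
    {R : ι → Ω → ℝ} (hR : ∀ i, Measurable (R i))
    (h : ∀ (S : Finset ι) (a : ι → ℝ),
      μ (⋂ i ∈ S, R i ⁻¹' Set.Iic (a i)) = ∏ i ∈ S, μ (R i ⁻¹' Set.Iic (a i))) :
    iIndepFun R μ := by
  rw [iIndepFun_iff_iIndep]
  refine iIndepSets.iIndep (fun i => (hR i).comap_le)
    (fun i => Set.preimage (R i) '' Set.range Set.Iic) (fun i => isPiSystem_Iic.comap (R i))
    (fun i => by rw [← MeasurableSpace.comap_generateFrom, ← borel_eq_generateFrom_Iic]; rfl) ?_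
  rw [iIndepSets_iff]
  intro S f hf
  simp only [Set.mem_image, Set.mem_range, exists_exists_eq_and] at hf
  choose! a ha using hf
  rw [Set.iInter₂_congr fun i hi => (ha i hi).symm, h, prod_congr rfl fun i hi => by rw [ha i hi]]

end Probability

namespace SmoothedRank

open Function

variable {Ω : Type*} {m0 : MeasurableSpace Ω} {μ : Measure Ω}

/-- The proportion of the segment `[A, A + E]` lying below `u`. -/
noncomputable def fracBelow (u A E : ℝ) : ℝ := (min u (A + E) - min u A) / E

lemma fracBelow_nonneg {E : ℝ} (hE : 0 ≤ E) (u A : ℝ) : 0 ≤ fracBelow u A E :=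
  div_nonneg (sub_nonneg.2 (min_le_min_left u (le_add_of_nonneg_right hE))) hE

lemma fracBelow_eq {E : ℝ} (hE : 0 < E) (u A : ℝ) :
    fracBelow u A E = max 0 (min ((u - A) / E) 1) := by
  have hu : u = A + (u - A) / E * E := by field_simp; ring
  rw [fracBelow, div_eq_iff hE.ne']
  set c := (u - A) / E
  rw [hu]
  simp only [min_def, max_def]
  split_ifs <;> nlinarith

lemma mul_fracBelow_zero_one {c : ℝ} (hc : 0 ≤ c) (a : ℝ) :
    c * fracBelow a 0 1 = min (a * c) c - min (a * c) 0 := by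
  rw [fracBelow, zero_add, div_one, mul_sub, mul_comm c, mul_comm c,
    min_mul_of_nonneg _ _ hc, min_mul_of_nonneg _ _ hc, one_mul, zero_mul]

lemma volume_restrict_Icc_Iic_div {E : ℝ} (hE : 0 < E) (u A : ℝ) :
    volume.restrict (Set.Icc (0 : ℝ) 1) (Set.Iic ((u - A) / E))
      = ENNReal.ofReal (fracBelow u A E) := by
  rw [Measure.restrict_apply measurableSet_Iic, Set.inter_comm, ← Set.Ici_inter_Iic,
    Set.inter_assoc, Set.Iic_inter_Iic, Set.Ici_inter_Iic, Real.volume_Icc, sub_zero,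
    fracBelow_eq hE, ENNReal.ofReal_max, ENNReal.ofReal_zero, zero_max, min_comm]

lemma volume_restrict_Icc_Iic (a : ℝ) :
    volume.restrict (Set.Icc (0 : ℝ) 1) (Set.Iic a) = ENNReal.ofReal (fracBelow a 0 1) := by
  simpa using volume_restrict_Icc_Iic_div one_pos a 0

theorem sum_div_card_ties_telescope {ι : Type*} (x : ι → ℝ) (f : ℕ → ℝ) (s : Finset ι) :
    ∑ j ∈ s, (f (#{i ∈ s | x j < x i} + #{i ∈ s | x i = x j}) - f #{i ∈ s | x j < x i})
        / #{i ∈ s | x i = x j} = f #s - f 0 := by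
  induction s using Finset.strongInduction with
  | _ s ih =>
  rcases s.eq_empty_or_nonempty with rfl | hne
  · simp
  obtain ⟨j₀, hj₀, hmin⟩ := s.exists_min_image x hne
  set s₀ := {j ∈ s | x j = x j₀}
  set s₁ := {j ∈ s | ¬ x j = x j₀}
  have hs₁ : s₁ ⊂ s := filter_ssubset.2 ⟨j₀, hj₀, not_not.2 rfl⟩
  have hcard : #s₁ + #s₀ = #s := by
    rw [add_comm]; exact card_filter_add_card_filter_not _
  have hs₀ : (#s₀ : ℝ) ≠ 0 := Nat.cast_ne_zero.2 (card_ne_zero_of_mem (mem_filter.2 ⟨hj₀, rfl⟩))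
  have bottom : ∀ j ∈ s₀, #{i ∈ s | x j < x i} = #s₁ ∧ #{i ∈ s | x i = x j} = #s₀ := by
    intro j hj
    rw [(mem_filter.1 hj).2]
    refine ⟨congrArg card (filter_congr fun i hi => ?_), congrArg card rfl⟩
    exact ⟨fun h => h.ne', fun h => lt_of_le_of_ne (hmin i hi) (Ne.symm h)⟩
  have upper : ∀ j ∈ s₁, #{i ∈ s | x j < x i} = #{i ∈ s₁ | x j < x i} ∧
      #{i ∈ s | x i = x j} = #{i ∈ s₁ | x i = x j} := by
    intro j hj
    obtain ⟨hjs, hj⟩ := mem_filter.1 hj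
    have hlt : x j₀ < x j := lt_of_le_of_ne (hmin j hjs) (Ne.symm hj)
    simp only [s₁, filter_filter]
    constructor <;> congr 1 <;> refine filter_congr fun i _ => ?_
    · exact ⟨fun h => ⟨(hlt.trans h).ne', h⟩, And.right⟩
    · exact ⟨fun h => ⟨h ▸ hj, h⟩, And.right⟩
  have sum₀ : ∑ j ∈ s₀, (f (#{i ∈ s | x j < x i} + #{i ∈ s | x i = x j})
      - f #{i ∈ s | x j < x i}) / #{i ∈ s | x i = x j} = f #s - f #s₁ := by
    rw [sum_congr rfl fun j hj => by rw [(bottom j hj).1, (bottom j hj).2, hcard],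
      sum_const, nsmul_eq_mul, mul_div_cancel₀ _ hs₀]
  have sum₁ : ∑ j ∈ s₁, (f (#{i ∈ s | x j < x i} + #{i ∈ s | x i = x j})
      - f #{i ∈ s | x j < x i}) / #{i ∈ s | x i = x j} = f #s₁ - f 0 := by
    rw [← ih s₁ hs₁]
    exact sum_congr rfl fun j hj => by rw [(upper j hj).1, (upper j hj).2]
  rw [← sum_filter_add_sum_filter_not s (fun j => x j = x j₀), sum₀, sum₁]
  ring

theorem sum_fracBelow_card {ι : Type*} [Fintype ι] (x : ι → ℝ) (a : ℝ) :
    ∑ j, fracBelow (a * Fintype.card ι) #{i | x j < x i} #{i | x i = x j}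
      = Fintype.card ι * fracBelow a 0 1 := by
  rw [mul_fracBelow_zero_one (Nat.cast_nonneg _)]
  simpa [fracBelow] using
    sum_div_card_ties_telescope x (fun k => min (a * Fintype.card ι) (k : ℝ)) univ

noncomputable def numAbove (y : ℕ → ℝ) (n : ℕ) : ℕ := #{i ∈ range (n + 1) | y n < y i}

noncomputable def numTies (y : ℕ → ℝ) (n : ℕ) : ℕ := #{i ∈ range (n + 1) | y i = y n}

/-- The probability that the `n`-th smoothed rank is at most `a`, over the tie-breaking
variable alone, when the data are `y`. -/
noncomputable def rankCDF (a : ℝ) (y : ℕ → ℝ) (n : ℕ) : ℝ :=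
  fracBelow (a * (n + 1)) (numAbove y n) (numTies y n)

lemma numTies_pos (y : ℕ → ℝ) (n : ℕ) : 0 < numTies y n :=
  card_pos.2 ⟨n, by simp⟩

lemma rankCDF_nonneg (a : ℝ) (y : ℕ → ℝ) (n : ℕ) : 0 ≤ rankCDF a y n :=
  fracBelow_nonneg (Nat.cast_nonneg _) _ _

lemma rankCDF_congr {y z : ℕ → ℝ} {n : ℕ} (h : ∀ i ≤ n, y i = z i) (a : ℝ) :
    rankCDF a y n = rankCDF a z n := by
  have h' : ∀ i ∈ range (n + 1), y i = z i := fun i hi => h i (Nat.lt_succ_iff.1 (mem_range.1 hi))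
  simp only [rankCDF, numAbove, numTies, h n le_rfl]
  congr 3 <;> exact filter_congr fun i hi => by rw [h' i hi]

lemma measurable_numAbove (n : ℕ) : Measurable fun y : ℕ → ℝ => (numAbove y n : ℝ) := by
  simp only [numAbove, card_filter, Nat.cast_sum, Nat.cast_ite, Nat.cast_one, Nat.cast_zero]
  exact Finset.measurable_sum _ fun i _ => Measurable.ite
    (measurableSet_lt (measurable_pi_apply n) (measurable_pi_apply i))
    measurable_const measurable_const

lemma measurable_numTies (n : ℕ) : Measurable fun y : ℕ → ℝ => (numTies y n : ℝ) := by
  simp only [numTies, card_filter, Nat.cast_sum, Nat.cast_ite, Nat.cast_one, Nat.cast_zero]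
  exact Finset.measurable_sum _ fun i _ => Measurable.ite
    (measurableSet_eq_fun (measurable_pi_apply i) (measurable_pi_apply n))
    measurable_const measurable_const

lemma rankCDF_extend_last {N : ℕ} (v : Fin (N + 1) → ℝ) (a : ℝ) :
    rankCDF a (extend Fin.val v 0) N
      = fracBelow (a * (N + 1)) #{k | v (Fin.last N) < v k} #{k | v k = v (Fin.last N)} := by
  have hlast := Fin.val_injective.extend_apply v 0 (Fin.last N)
  rw [Fin.val_last] at hlast
  simp only [rankCDF, numAbove, numTies, hlast, card_filter_range_eq_card_filter_fin,
    Fin.val_injective.extend_apply]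

lemma rankCDF_comp_decomposeFinLast_symm_of_lt {N n : ℕ} (hn : n < N) (w : Fin (N + 1) → ℝ)
    (j : Fin (N + 1)) (σ : Equiv.Perm (Fin N)) (a : ℝ) :
    rankCDF a (extend Fin.val (w ∘ Equiv.Perm.decomposeFinLast.symm (j, σ)) 0) n
      = rankCDF a (extend Fin.val ((w ∘ Equiv.swap (Fin.last N) j ∘ Fin.castSucc) ∘ σ) 0) n := by
  refine rankCDF_congr (fun i hi => ?_) _
  have hiN : i < N := hi.trans_lt hn
  rw [extend_val_apply_of_lt _ _ (hiN.trans N.lt_succ_self), extend_val_apply_of_lt _ _ hiN]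
  exact congrArg w (Equiv.Perm.decomposeFinLast_symm_apply_castSucc j σ ⟨i, hiN⟩)

lemma rankCDF_comp_decomposeFinLast_symm_last {N : ℕ} (w : Fin (N + 1) → ℝ) (j : Fin (N + 1))
    (σ : Equiv.Perm (Fin N)) (a : ℝ) :
    rankCDF a (extend Fin.val (w ∘ Equiv.Perm.decomposeFinLast.symm (j, σ)) 0) N
      = fracBelow (a * (N + 1)) #{k | w j < w k} #{k | w k = w j} := by
  rw [rankCDF_extend_last]
  simp only [comp_apply, Equiv.Perm.decomposeFinLast_symm_apply_last]
  rw [card_filter_comp_perm _ (fun k => w j < w k), card_filter_comp_perm _ (fun k => w k = w j)]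

theorem sum_perm_prod_rankCDF (a : ℕ → ℝ) {N : ℕ} {S : Finset ℕ} (hS : ∀ n ∈ S, n < N)
    (w : Fin N → ℝ) :
    ∑ π : Equiv.Perm (Fin N), ∏ n ∈ S, rankCDF (a n) (extend Fin.val (w ∘ π) 0) n
      = N ! * ∏ n ∈ S, fracBelow (a n) 0 1 := by
  induction N generalizing S with
  | zero =>
    obtain rfl : S = ∅ := eq_empty_of_forall_notMem fun n hn => (hS n hn).not_ge n.zero_le
    simp
  | succ N ih =>
  have inner : ∀ T : Finset ℕ, (∀ n ∈ T, n < N) → ∀ j : Fin (N + 1),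
      ∑ σ : Equiv.Perm (Fin N), ∏ n ∈ T,
          rankCDF (a n) (extend Fin.val (w ∘ Equiv.Perm.decomposeFinLast.symm (j, σ)) 0) n
        = N ! * ∏ n ∈ T, fracBelow (a n) 0 1 := fun T hT j => by
    rw [← ih hT (w ∘ Equiv.swap (Fin.last N) j ∘ Fin.castSucc)]
    exact sum_congr rfl fun σ _ => prod_congr rfl fun n hn =>
      rankCDF_comp_decomposeFinLast_symm_of_lt (hT n hn) w j σ (a n)
  have sum_last := sum_fracBelow_card w (a N)
  simp only [Fintype.card_fin, Nat.cast_add, Nat.cast_one] at sum_last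
  have hS' : ∀ n ∈ S.erase N, n < N := fun n hn =>
    lt_of_le_of_ne (Nat.lt_succ_iff.1 (hS n (mem_of_mem_erase hn))) (ne_of_mem_erase hn)
  rw [← Equiv.Perm.decomposeFinLast.symm.sum_comp, Fintype.sum_prod_type]
  by_cases hN : N ∈ S
  · simp_rw [← mul_prod_erase S _ hN, rankCDF_comp_decomposeFinLast_symm_last, ← mul_sum,
      inner _ hS', ← sum_mul, sum_last, Nat.factorial_succ]
    push_cast
    ring
  · rw [erase_eq_of_notMem hN] at hS'
    simp_rw [inner S hS', sum_const, Finset.card_fin, nsmul_eq_mul, Nat.factorial_succ]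
    push_cast
    ring

lemma measurable_rankCDF (a : ℝ) (n : ℕ) : Measurable fun y : ℕ → ℝ => rankCDF a y n := by
  have hA := measurable_numAbove n
  have hE := measurable_numTies n
  simp only [rankCDF, fracBelow]
  fun_prop

theorem lintegral_prod_rankCDF [IsProbabilityMeasure μ] {X : ℕ → Ω → ℝ}
    (hX : ∀ n, Measurable (X n))
    (hexch : ∀ (n : ℕ) (π : Equiv.Perm (Fin n)),
      μ.map (fun ω => fun i : Fin n => X (π i) ω) = μ.map (fun ω => fun i : Fin n => X i ω))
    (S : Finset ℕ) (a : ℕ → ℝ) :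
    ∫⁻ ω, ∏ n ∈ S, ENNReal.ofReal (rankCDF (a n) (fun i => X i ω) n) ∂μ
      = ∏ n ∈ S, ENNReal.ofReal (fracBelow (a n) 0 1) := by
  set N := S.sup id + 1
  have hSN : ∀ n ∈ S, n < N := fun n hn => Nat.lt_succ_of_le (le_sup (f := id) hn)
  set H : (Fin N → ℝ) → ℝ≥0∞ := fun w =>
    ENNReal.ofReal (∏ n ∈ S, rankCDF (a n) (extend Fin.val w 0) n)
  have hH : Measurable H := ENNReal.measurable_ofReal.comp <| Finset.measurable_prod _
    fun n _ => (measurable_rankCDF (a n) n).comp (measurable_extend_val N)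
  have prefix_eq : ∀ ω, ∏ n ∈ S, ENNReal.ofReal (rankCDF (a n) (fun i => X i ω) n)
      = H fun i => X i ω := fun ω => by
    rw [← ENNReal.ofReal_prod_of_nonneg fun n _ => rankCDF_nonneg _ _ _]
    exact congrArg _ <| prod_congr rfl fun n hn => rankCDF_congr (fun i hi =>
      (extend_val_apply_of_lt (fun k : Fin N => X k ω) _ (hi.trans_lt (hSN n hn))).symm) _
  have symmetrized : ∀ w : Fin N → ℝ, ∑ π : Equiv.Perm (Fin N), H (w ∘ π)
      = N ! * ∏ n ∈ S, ENNReal.ofReal (fracBelow (a n) 0 1) := fun w => by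
    rw [← ENNReal.ofReal_sum_of_nonneg fun π _ => prod_nonneg fun n _ => rankCDF_nonneg _ _ _,
      sum_perm_prod_rankCDF a hSN w, ENNReal.ofReal_mul (by positivity), ENNReal.ofReal_natCast,
      ENNReal.ofReal_prod_of_nonneg fun n _ => fracBelow_nonneg zero_le_one _ _]
  have key := card_perm_mul_lintegral_of_exchangeable (Y := fun ω (i : Fin N) => X i ω)
    (measurable_pi_lambda _ fun i => hX i) (hexch N) hH
  simp_rw [symmetrized, lintegral_const, measure_univ, mul_one, Fintype.card_perm,
    Fintype.card_fin] at key
  simp_rw [prefix_eq]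
  exact (ENNReal.mul_right_inj (by simp [Nat.factorial_ne_zero]) (ENNReal.natCast_ne_top _)).1 key

noncomputable def smoothedRank (X θ : ℕ → Ω → ℝ) (n : ℕ) (ω : Ω) : ℝ :=
  (numAbove (fun i => X i ω) n : ℝ) / (n + 1)
    + θ n ω * ((numTies (fun i => X i ω) n : ℝ) / (n + 1))

lemma smoothedRank_le_iff (X θ : ℕ → Ω → ℝ) (n : ℕ) (ω : Ω) (a : ℝ) :
    smoothedRank X θ n ω ≤ a ↔ θ n ω ≤
      (a * (n + 1) - numAbove (fun i => X i ω) n) / numTies (fun i => X i ω) n := by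
  have hE : (0 : ℝ) < numTies (fun i => X i ω) n := Nat.cast_pos.2 (numTies_pos _ n)
  rw [smoothedRank, le_div_iff₀ hE, ← mul_div_assoc, ← add_div, div_le_iff₀ (by positivity)]
  constructor <;> intro h <;> linarith

lemma measurable_smoothedRank {X θ : ℕ → Ω → ℝ} (hX : ∀ n, Measurable (X n))
    (hθ : ∀ n, Measurable (θ n)) (n : ℕ) : Measurable (smoothedRank X θ n) := by
  have hXseq : Measurable fun ω i => X i ω := measurable_pi_lambda _ hX
  have hA := (measurable_numAbove n).comp hXseq
  have hE := (measurable_numTies n).comp hXseq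
  have hθn := hθ n
  simp only [comp_def] at hA hE
  unfold smoothedRank
  fun_prop

theorem measure_iInter_smoothedRank_le [IsProbabilityMeasure μ] {X θ : ℕ → Ω → ℝ}
    (hX : ∀ n, Measurable (X n)) (hθ : ∀ n, Measurable (θ n))
    (hexch : ∀ (n : ℕ) (π : Equiv.Perm (Fin n)),
      μ.map (fun ω => fun i : Fin n => X (π i) ω) = μ.map (fun ω => fun i : Fin n => X i ω))
    (hθindep : iIndepFun θ μ)
    (hθunif : ∀ n, μ.map (θ n) = volume.restrict (Set.Icc (0 : ℝ) 1))
    (hθX : IndepFun (fun ω n => X n ω) (fun ω n => θ n ω) μ) (S : Finset ℕ) (a : ℕ → ℝ) :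
    μ (⋂ n ∈ S, smoothedRank X θ n ⁻¹' Set.Iic (a n))
      = ∏ n ∈ S, ENNReal.ofReal (fracBelow (a n) 0 1) := by
  have hc : ∀ n, Measurable fun y : ℕ → ℝ => (a n * (n + 1) - numAbove y n) / numTies y n :=
    fun n => (measurable_const.sub (measurable_numAbove n)).div (measurable_numTies n)
  simp_rw [Set.preimage, Set.mem_Iic, smoothedRank_le_iff]
  rw [measure_iInter_le_comp_eq_lintegral (measurable_pi_lambda _ hX) hθ hθX hθindep S hc]
  simp_rw [hθunif, volume_restrict_Icc_Iic_div (Nat.cast_pos.2 (numTies_pos _ _))]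
  exact lintegral_prod_rankCDF hX hexch S a

end SmoothedRank

open SmoothedRank in
/-- Smoothed sequential ranks of an exchangeable sequence are i.i.d. `Uniform[0,1]`:
with `R n = (1/(n+1)) #{i ≤ n : X i > X n} + θ n ⬝ (1/(n+1)) #{i ≤ n : X i = X n}`
(0-based indexing, the `n`-th point counted among the first `n+1`). -/
theorem smoothed_sequential_ranks_iid_uniform {Ω : Type*} {m0 : MeasurableSpace Ω}
    {μ : Measure Ω} [IsProbabilityMeasure μ]
    (X : ℕ → Ω → ℝ) (hXmeas : ∀ n, Measurable (X n))
    (θ : ℕ → Ω → ℝ) (hθmeas : ∀ n, Measurable (θ n))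
    -- exchangeability of every finite initial segment
    (hexch : ∀ (n : ℕ) (π : Equiv.Perm (Fin n)),
      Measure.map (fun ω => fun i : Fin n => X (π i) ω) μ
        = Measure.map (fun ω => fun i : Fin n => X i ω) μ)
    -- θ is an i.i.d. Uniform[0,1] sequence, independent of the data
    (hθindep : iIndepFun θ μ)
    (hθunif : ∀ n, Measure.map (θ n) μ = volume.restrict (Set.Icc (0 : ℝ) 1))
    (hθX : IndepFun (fun ω => fun n => X n ω) (fun ω => fun n => θ n ω) μ) :
    let R : ℕ → Ω → ℝ := fun n ω =>
      (((Finset.range (n + 1)).filter (fun i => X i ω > X n ω)).card : ℝ) / (n + 1)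
        + θ n ω *
          ((((Finset.range (n + 1)).filter (fun i => X i ω = X n ω)).card : ℝ) / (n + 1))
    iIndepFun R μ ∧
      ∀ n, Measure.map (R n) μ = volume.restrict (Set.Icc (0 : ℝ) 1) := by
  show iIndepFun (smoothedRank X θ) μ ∧ ∀ n, μ.map (smoothedRank X θ n) = _
  have hR := measurable_smoothedRank hXmeas hθmeas
  have cdf := measure_iInter_smoothedRank_le hXmeas hθmeas hexch hθindep hθunif hθX
  have marginal : ∀ n a, μ (smoothedRank X θ n ⁻¹' Set.Iic a)
      = volume.restrict (Set.Icc (0 : ℝ) 1) (Set.Iic a) := fun n a => by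
    rw [volume_restrict_Icc_Iic]
    simpa using cdf {n} fun _ => a
  refine ⟨iIndepFun_of_measure_iInter_preimage_Iic hR fun S a => ?_, fun n => ?_⟩
  · simp_rw [cdf, marginal, volume_restrict_Icc_Iic]
  · have := Measure.isProbabilityMeasure_map (μ := μ) (hR n).aemeasurable
    exact Measure.ext_of_Iic _ _ fun a => by
      rw [Measure.map_apply (hR n) measurableSet_Iic, marginal]
end

section
/- Let (G_n) act sequentially on (𝒳^n) (ordered inclusions ι_{n+1}: G_n → G_{n+1} compatible with projections and not acting on the last coordinate), with orbit selectors γ_n. Then the vectors (γ_{n-1}(X^{n-1}), X_n) and X^n lie in the same G_n-orbit; consequently γ_n((γ_{n-1}(X^{n-1}), X_n)) = γ_n(X^n), i.e., γ_n(X^n) is a function of γ_{n-1}(X^{n-1}) and X_n. -/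
/-- Under a sequential group action (groups `G n` acting on `𝒳ⁿ`, ordered by
inclusions `ι n : G n →* G (n+1)` that act on the first `n` coordinates as `G n`
does and do not act on the last coordinate), with orbit selectors `γ n`, the vector
`(γ n (x_1,…,x_n), x_{n+1})` lies in the same `G (n+1)`-orbit as `(x_1,…,x_{n+1})`;
consequently they have the same orbit representative, i.e. `γ (n+1) x` is a function
of `γ n (Fin.init x)` and the last coordinate only. -/
theorem sequential_action_orbit_selector
    (𝒳 : Type*) (G : ℕ → Type*) [∀ n, Group (G n)]
    [∀ n, MulAction (G n) (Fin n → 𝒳)]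
    (ι : ∀ n, G n →* G (n + 1)) (hι : ∀ n, Function.Injective (ι n))
    -- the inclusions act on the first `n` coordinates and fix the last one
    (hconcat : ∀ (n : ℕ) (g : G n) (x : Fin (n + 1) → 𝒳),
      ι n g • x = Fin.snoc (g • Fin.init x) (x (Fin.last n)))
    -- orbit selectors: constant on orbits and selecting a point of the orbit
    (γ : ∀ n, (Fin n → 𝒳) → (Fin n → 𝒳))
    (hγorb : ∀ (n : ℕ) (x : Fin n → 𝒳), γ n x ∈ MulAction.orbit (G n) x)
    (hγinv : ∀ (n : ℕ) (g : G n) (x : Fin n → 𝒳), γ n (g • x) = γ n x) :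
    ∀ (n : ℕ) (x : Fin (n + 1) → 𝒳),
      (Fin.snoc (γ n (Fin.init x)) (x (Fin.last n)) ∈ MulAction.orbit (G (n + 1)) x) ∧
      γ (n + 1) (Fin.snoc (γ n (Fin.init x)) (x (Fin.last n))) = γ (n + 1) x := by
  intro n x
  obtain ⟨g, hg⟩ := hγorb n (Fin.init x)
  have key : ι n g • x = Fin.snoc (γ n (Fin.init x)) (x (Fin.last n)) := by
    rw [hconcat, ← hg]
  constructor
  · exact ⟨ι n g, key⟩
  · rw [← key, hγinv]
end

section
/- Recovering a random variable from its randomized rank: let X be a real random variable with complementary CDF F̄ and quantile-type inverse G(δ) = inf{b : F̄(b) ≤ δ}, and let θ ~ Uniform(0,1) be independent of X, with R = F̄(X) + θ(F̄(X⁻) − F̄(X)). Then P(G(R) = X) = 1; moreover on the event {F̄(X⁻) > F̄(X)}, θ = (R − F̄(G(R)))/(F̄(G(R)⁻) − F̄(G(R))) almost surely, so the pair (X, θ) is an almost-sure measurable function of R. -/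
/-!
If `θ ∈ [0, 1)`, the randomized rank `R` of `x` lies in `[F̄(x), F̄(x⁻))` when `x` is an atom and
equals `F̄(x)` otherwise, so in both cases `F̄(b) > R ≥ F̄(x)` for all `b < x` as soon as every
left neighbourhood `(b, x]` has positive mass; then `x` is the least `b` with `F̄(b) ≤ R`, that is
`G(R) = x`. Almost every `x` has this property, and `θ < 1` almost surely. Once `G(R) = X`, the
formula for `θ` is just the definition of `R` solved for `θ`.
-/

open MeasureTheory ProbabilityTheory Set

theorem MeasureTheory.Measure.ae_forall_lt_measure_Ioc_ne_zero {α : Type*} [LinearOrder α]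
    [TopologicalSpace α] [OrderTopology α] [SecondCountableTopology α] [MeasurableSpace α]
    (ν : Measure α) : ∀ᵐ x ∂ν, ∀ b < x, ν (Ioc b x) ≠ 0 := by
  -- A point of the support whose left neighbourhood `(b, x]` is null is the right end of a gap
  -- of the support: there are countably many of them, and these carry no mass.
  set E := {x ∈ ν.support | ∃ z < x, ∀ y ∈ ν.support, y < x → y ≤ z}
  have hE : E.Countable := countable_image_lt_image_Iio_within ν.support id
  have hnull : ν (⋃ x ∈ {x ∈ E | ν {x} = 0}, {x}) = 0 :=
    (measure_biUnion_null_iff (hE.mono fun _ h ↦ h.1)).2 fun _ h ↦ h.2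
  filter_upwards [ν.support_mem_ae, measure_eq_zero_iff_ae_notMem.1 hnull] with x hxS hxE b hbx h0
  refine hxE (mem_biUnion ⟨⟨hxS, b, hbx, fun y hyS hyx ↦ ?_⟩, measure_mono_null ?_ h0⟩ rfl)
  · by_contra! hby
    exact Measure.subset_compl_support_of_isOpen isOpen_Ioo
      (measure_mono_null Ioo_subset_Ioc_self h0) ⟨hby, hyx⟩ hyS
  · simpa using hbx

section RandomizedRank

variable (ν : Measure ℝ) [IsFiniteMeasure ν]

/-- The randomized rank `F̄(x) + t (F̄(x⁻) - F̄(x))` of `x`, for `F̄(b) = ν (b, ∞)`. -/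
noncomputable def randomizedRank (x t : ℝ) : ℝ :=
  ν.real (Ioi x) + t * (ν.real (Ici x) - ν.real (Ioi x))

theorem randomizedRank_eq_add_mul_measureReal_singleton (x t : ℝ) :
    randomizedRank ν x t = ν.real (Ioi x) + t * ν.real {x} := by
  rw [randomizedRank, ← Ioi_insert, ← singleton_union,
    measureReal_union (disjoint_singleton_left.2 self_notMem_Ioi) measurableSet_Ioi]
  ring

theorem measureReal_Ioi_eq_measureReal_Ioc_add (b x : ℝ) (h : b ≤ x) :
    ν.real (Ioi b) = ν.real (Ioc b x) + ν.real (Ioi x) := by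
  rw [← Ioc_union_Ioi_eq_Ioi h, measureReal_union Ioc_disjoint_Ioi_same measurableSet_Ioi]

variable {ν}

theorem randomizedRank_lt {x t b : ℝ} (ht : t ∈ Ico 0 1) (hbx : b < x) (hb : ν (Ioc b x) ≠ 0) :
    randomizedRank ν x t < ν.real (Ioi b) := by
  have hpos : 0 < ν.real (Ioc b x) :=
    measureReal_nonneg.lt_of_ne' ((measureReal_ne_zero_iff).2 hb)
  have hle : ν.real {x} ≤ ν.real (Ioc b x) := measureReal_mono (by simpa using hbx)
  rw [randomizedRank_eq_add_mul_measureReal_singleton,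
    measureReal_Ioi_eq_measureReal_Ioc_add ν b x hbx.le]
  nlinarith [ht.1, ht.2]

theorem sInf_setOf_measureReal_Ioi_le_randomizedRank {x t : ℝ} (ht : t ∈ Ico 0 1)
    (hx : ∀ b < x, ν (Ioc b x) ≠ 0) :
    sInf {b | ν.real (Ioi b) ≤ randomizedRank ν x t} = x := by
  refine IsLeast.csInf_eq
    ⟨?_, fun b hb ↦ not_lt.1 fun hbx ↦ (randomizedRank_lt ht hbx (hx b hbx)).not_ge hb⟩
  rw [mem_ofPred_eq, randomizedRank_eq_add_mul_measureReal_singleton]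
  exact le_add_of_nonneg_right (mul_nonneg ht.1 measureReal_nonneg)

end RandomizedRank

theorem recover_from_randomized_rank_general {Ω : Type*} {m0 : MeasurableSpace Ω}
    {μ : Measure Ω} [IsProbabilityMeasure μ]
    (X θ : Ω → ℝ) (hX : Measurable X) (hθ : Measurable θ)
    (hθunif : Measure.map θ μ = volume.restrict (Set.Icc (0 : ℝ) 1)) :
    let Fbar : ℝ → ℝ := fun b => (μ {ω | X ω > b}).toReal
    let FbarL : ℝ → ℝ := fun b => (μ {ω | X ω ≥ b}).toReal
    let Ginv : ℝ → ℝ := fun δ => sInf {b : ℝ | Fbar b ≤ δ}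
    let R : Ω → ℝ := fun ω => Fbar (X ω) + θ ω * (FbarL (X ω) - Fbar (X ω))
    (∀ᵐ ω ∂μ, Ginv (R ω) = X ω) ∧
    (∀ᵐ ω ∂μ, FbarL (X ω) > Fbar (X ω) →
      θ ω = (R ω - Fbar (Ginv (R ω))) / (FbarL (Ginv (R ω)) - Fbar (Ginv (R ω)))) := by
  intro Fbar FbarL Ginv R
  have hFbar : ∀ b, Fbar b = (μ.map X).real (Ioi b) :=
    fun b ↦ (map_measureReal_apply hX measurableSet_Ioi).symm
  have hFbarL : ∀ b, FbarL b = (μ.map X).real (Ici b) :=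
    fun b ↦ (map_measureReal_apply hX measurableSet_Ici).symm
  have hθ01 : ∀ᵐ ω ∂μ, θ ω ∈ Ico 0 1 := by
    refine ae_of_ae_map hθ.aemeasurable ?_
    rw [hθunif, ← Measure.restrict_congr_set Ico_ae_eq_Icc]
    exact ae_restrict_mem measurableSet_Ico
  have hG : ∀ᵐ ω ∂μ, Ginv (R ω) = X ω := by
    filter_upwards [hθ01, ae_of_ae_map hX.aemeasurable (μ.map X).ae_forall_lt_measure_Ioc_ne_zero]
      with ω ht hx
    simpa only [Ginv, R, hFbar, hFbarL, randomizedRank] using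
      sInf_setOf_measureReal_Ioi_le_randomizedRank ht hx
  refine ⟨hG, ?_⟩
  filter_upwards [hG] with ω hGω hatom
  rw [hGω, eq_div_iff (sub_pos.2 hatom).ne']
  ring

/-- Recovering a random variable from its randomized rank: with
`F̄(b) = P(X > b)`, left limit `F̄(b⁻) = P(X ≥ b)`, generalized inverse
`G(δ) = inf {b : F̄(b) ≤ δ}`, and `R = F̄(X) + θ (F̄(X⁻) − F̄(X))` for
`θ ~ Uniform[0,1]` independent of `X`, one has `G(R) = X` almost surely; moreover,
on the event `{F̄(X⁻) > F̄(X)}`, `θ = (R − F̄(G(R)))/(F̄(G(R)⁻) − F̄(G(R)))`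
almost surely — so the pair `(X, θ)` is an a.s. measurable function of `R`. -/
theorem recover_from_randomized_rank {Ω : Type*} {m0 : MeasurableSpace Ω}
    {μ : Measure Ω} [IsProbabilityMeasure μ]
    (X θ : Ω → ℝ) (hX : Measurable X) (hθ : Measurable θ)
    (hθunif : Measure.map θ μ = volume.restrict (Set.Icc (0 : ℝ) 1))
    (hindep : IndepFun X θ μ) :
    let Fbar : ℝ → ℝ := fun b => (μ {ω | X ω > b}).toReal
    let FbarL : ℝ → ℝ := fun b => (μ {ω | X ω ≥ b}).toReal
    let Ginv : ℝ → ℝ := fun δ => sInf {b : ℝ | Fbar b ≤ δ}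
    let R : Ω → ℝ := fun ω => Fbar (X ω) + θ ω * (FbarL (X ω) - Fbar (X ω))
    (∀ᵐ ω ∂μ, Ginv (R ω) = X ω) ∧
    (∀ᵐ ω ∂μ, FbarL (X ω) > Fbar (X ω) →
      θ ω = (R ω - Fbar (Ginv (R ω))) / (FbarL (Ginv (R ω)) - Fbar (Ginv (R ω)))) :=
  recover_from_randomized_rank_general (m0 := m0) X θ hX hθ hθunif
end
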